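/- Let g and (h_i)_{i∈ψ} be independent random variables, each exponentially distributed with rate 1, where ψ is a nonempty finite index set. Fix r>0, α≥2, distances d_i>0 for i∈ψ, and N≥0, and let η = g r^{-α}/(N + Σ_{i∈ψ} h_i d_i^{-α}). Then for all T ≥ 0 and S_th ≥ 0, the cell-centre conditional coverage probability satisfies P(η > T | η > S_th) = [e^{-max(T,S_th) r^α N} ∏_{i∈ψ}(1 + max(T,S_th) r^α d_i^{-α})^{-1}] / [e^{-S_th r^α N} ∏_{i∈ψ}(1 + S_th r^α d_i^{-α})^{-1}]. -/

import Mathlib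

/-!
Given the interference `I = ∑ i, h i * d i ^ (-α)`, the event `η > S` is `g > S r^α (N + I)`;
as `g ~ Exp(1)` is independent of `I`, its probability is `exp (-S r^α (N + I))`. Averaging,
`P(η > S)` is the Laplace transform of `N + I` at `S r^α`, which factors over the independent
`h i ~ Exp(1)` as `exp (-S r^α N) * ∏ i, (1 + S r^α d i^(-α))⁻¹`. Since
`{η > S_th} ∩ {η > T} = {η > max T S_th}`, the conditional probability is a ratio of two such
coverage probabilities.
-/

open MeasureTheory ProbabilityTheory Real Set
open scoped ENNReal

namespace ProbabilityTheory

variable {r : ℝ}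

lemma expMeasure_Ioi (hr : 0 < r) {t : ℝ} (ht : 0 ≤ t) :
    expMeasure r (Ioi t) = ENNReal.ofReal (exp (-(r * t))) := by
  have := isProbabilityMeasure_expMeasure hr
  have hexp_le : exp (-(r * t)) ≤ 1 := exp_le_one_iff.2 (by nlinarith)
  rw [← compl_Iic, prob_compl_eq_one_sub measurableSet_Iic, ← ofReal_cdf, cdf_expMeasure_eq hr,
    if_pos ht, ← ENNReal.ofReal_one, ← ENNReal.ofReal_sub _ (sub_nonneg.2 hexp_le), sub_sub_cancel]

lemma ae_pos_of_map_eq_expMeasure {Ω : Type*} [MeasurableSpace Ω] {μ : Measure Ω} {X : Ω → ℝ}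
    (hr : 0 < r) (hX : Measurable X) (hlaw : μ.map X = expMeasure r) : ∀ᵐ ω ∂μ, 0 < X ω := by
  have := isProbabilityMeasure_expMeasure hr
  refine ae_of_ae_map hX.aemeasurable ?_
  rw [hlaw, ae_iff]
  change expMeasure r (Ioi 0)ᶜ = 0
  rw [prob_compl_eq_zero_iff measurableSet_Ioi]
  simpa using expMeasure_Ioi hr le_rfl

lemma lintegral_exp_neg_mul_expMeasure (hr : 0 < r) {a : ℝ} (ha : 0 ≤ a) :
    ∫⁻ y, ENNReal.ofReal (exp (-(a * y))) ∂expMeasure r = ENNReal.ofReal (r / (r + a)) := by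
  have hra : 0 < r + a := by linarith
  have hdensity : exponentialPDF r * (fun y ↦ ENNReal.ofReal (exp (-(a * y))))
      = (Ici 0).indicator (fun y ↦ ENNReal.ofReal (r * exp (-(r + a) * y))) := by
    ext y
    rcases le_or_gt 0 y with hy | hy
    · rw [Pi.mul_apply, exponentialPDF_of_nonneg hy, indicator_of_mem (mem_Ici.2 hy),
        ← ENNReal.ofReal_mul (by positivity), mul_assoc, ← exp_add]
      ring_nf
    · rw [Pi.mul_apply, exponentialPDF_of_neg hy, indicator_of_notMem (notMem_Ici.2 hy), zero_mul]
  have hintegral : ∫ y in Ioi 0, r * exp (-(r + a) * y) = r / (r + a) := by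
    rw [integral_const_mul, integral_exp_mul_Ioi (by linarith), mul_zero, exp_zero]
    field_simp
  have hpdf : Measurable (exponentialPDF r) := (measurable_exponentialPDFReal r).ennreal_ofReal
  change ∫⁻ y, _ ∂volume.withDensity (exponentialPDF r) = _
  rw [lintegral_withDensity_eq_lintegral_mul _ hpdf (by fun_prop), hdensity,
    lintegral_indicator measurableSet_Ici, setLIntegral_congr Ioi_ae_eq_Ici.symm,
    ← ofReal_integral_eq_lintegral_ofReal, hintegral]
  · exact (integrableOn_exp_mul_Ioi (by linarith) 0).const_mul r
  · exact ae_of_all _ fun y ↦ by positivity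

variable {Ω : Type*} [MeasurableSpace Ω] {μ : Measure Ω}

lemma measure_lt_eq_lintegral_exp_of_indepFun [IsFiniteMeasure μ] {X Y : Ω → ℝ}
    (hr : 0 < r) (hX : Measurable X) (hY : Measurable Y) (hXY : IndepFun X Y μ)
    (hlaw : μ.map Y = expMeasure r) (hX_nonneg : ∀ᵐ ω ∂μ, 0 ≤ X ω) :
    μ {ω | X ω < Y ω} = ∫⁻ ω, ENNReal.ofReal (exp (-(r * X ω))) ∂μ := by
  have := isProbabilityMeasure_expMeasure hr
  have hlt : MeasurableSet {p : ℝ × ℝ | p.1 < p.2} :=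
    measurableSet_lt measurable_fst measurable_snd
  have hjoint : μ.map (fun ω ↦ (X ω, Y ω)) = (μ.map X).prod (expMeasure r) := by
    rw [← hlaw]
    exact (indepFun_iff_map_prod_eq_prod_map_map hX.aemeasurable hY.aemeasurable).1 hXY
  calc μ {ω | X ω < Y ω}
      = (μ.map X).prod (expMeasure r) {p : ℝ × ℝ | p.1 < p.2} := by
        rw [← hjoint, Measure.map_apply (hX.prodMk hY) hlt]; rfl
    _ = ∫⁻ x, expMeasure r (Ioi x) ∂μ.map X := Measure.prod_apply hlt
    _ = ∫⁻ x, ENNReal.ofReal (exp (-(r * x))) ∂μ.map X := by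
        refine lintegral_congr_ae ?_
        filter_upwards [ae_map_iff hX.aemeasurable measurableSet_Ici |>.2 hX_nonneg] with x hx
        exact expMeasure_Ioi hr hx
    _ = ∫⁻ ω, ENNReal.ofReal (exp (-(r * X ω))) ∂μ := lintegral_map (by fun_prop) hX

lemma lintegral_exp_neg_sum_of_iIndepFun {ι : Type*} [Fintype ι] {X : ι → Ω → ℝ}
    (hr : 0 < r) (hX : ∀ i, Measurable (X i)) (hXind : iIndepFun X μ)
    (hlaw : ∀ i, μ.map (X i) = expMeasure r) {c : ι → ℝ} (hc : ∀ i, 0 ≤ c i) :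
    ∫⁻ ω, ENNReal.ofReal (exp (-∑ i, c i * X i ω)) ∂μ = ∏ i, ENNReal.ofReal (r / (r + c i)) := by
  have hfactor : ∀ ω, ENNReal.ofReal (exp (-∑ i, c i * X i ω))
      = ∏ i, ENNReal.ofReal (exp (-(c i * X i ω))) := fun ω ↦ by
    rw [← Finset.sum_neg_distrib, exp_sum, ENNReal.ofReal_prod_of_nonneg fun i _ ↦ (exp_pos _).le]
  have hfactors_indep : iIndepFun (fun i ω ↦ ENNReal.ofReal (exp (-(c i * X i ω)))) μ :=
    hXind.comp (fun i y ↦ ENNReal.ofReal (exp (-(c i * y)))) fun i ↦ by fun_prop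
  simp_rw [hfactor]
  rw [lintegral_prod_eq_prod_lintegral_of_indepFun _ _ hfactors_indep fun i ↦ by fun_prop]
  refine Finset.prod_congr rfl fun i _ ↦ ?_
  rw [← lintegral_map (f := fun y ↦ ENNReal.ofReal (exp (-(c i * y)))) (by fun_prop) (hX i),
    hlaw i, lintegral_exp_neg_mul_expMeasure hr (hc i)]

lemma iIndepFun.indepFun_pi_option_elim {ι : Type*} [Fintype ι] {Y : Ω → ℝ} {X : ι → Ω → ℝ}
    (hY : Measurable Y) (hX : ∀ i, Measurable (X i))
    (hind : iIndepFun (fun o : Option ι ↦ Option.elim o Y X) μ) :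
    IndepFun (fun ω i ↦ X i ω) Y μ := by
  classical
  have hmeas : ∀ o : Option ι, Measurable (Option.elim o Y X) := fun o ↦ by
    cases o with
    | none => exact hY
    | some i => exact hX i
  have hsplit := hind.indepFun_finset {none}ᶜ {none} disjoint_compl_left hmeas
  exact hsplit.comp
    (φ := fun (x : ({none}ᶜ : Finset (Option ι)) → ℝ) i ↦ x ⟨some i, by simp⟩)
    (ψ := fun (x : ({none} : Finset (Option ι)) → ℝ) ↦ x ⟨none, Finset.mem_singleton_self _⟩)
    (by fun_prop) (by fun_prop)

end ProbabilityTheory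

lemma lt_mul_rpow_neg_div_iff {r W : ℝ} (hr : 0 < r) (hW : 0 < W) (α S x : ℝ) :
    S < x * r ^ (-α) / W ↔ S * r ^ α * W < x := by
  rw [lt_div_iff₀ hW, rpow_neg hr.le, ← div_eq_mul_inv, lt_div_iff₀ (rpow_pos_of_pos hr α)]
  ring_nf

open Finset in
theorem measureReal_lt_sinr {Ω : Type*} [MeasurableSpace Ω] (μ : Measure Ω)
    [IsProbabilityMeasure μ]
    {ι : Type*} [Fintype ι] [Nonempty ι]
    (g : Ω → ℝ) (h : ι → Ω → ℝ)
    (hg_meas : Measurable g) (hh_meas : ∀ i, Measurable (h i))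
    (hg_exp : Measure.map g μ = expMeasure 1)
    (hh_exp : ∀ i, Measure.map (h i) μ = expMeasure 1)
    (h_indep : iIndepFun (fun o : Option ι => Option.elim o g h) μ)
    {r N : ℝ} (hr : 0 < r) (hN : 0 ≤ N) (α : ℝ) {d : ι → ℝ} (hd : ∀ i, 0 < d i)
    {S : ℝ} (hS : 0 ≤ S) :
    μ.real {ω | S < g ω * r ^ (-α) / (N + ∑ i, h i ω * d i ^ (-α))}
      = exp (-(S * r ^ α * N)) * ∏ i, (1 + S * r ^ α * d i ^ (-α))⁻¹ := by
  set X : Ω → ℝ := fun ω ↦ S * r ^ α * (N + ∑ i, h i ω * d i ^ (-α))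
  have hX : Measurable X := by fun_prop
  have hh_pos : ∀ᵐ ω ∂μ, ∀ i, 0 < h i ω :=
    ae_all_iff.2 fun i ↦ ae_pos_of_map_eq_expMeasure one_pos (hh_meas i) (hh_exp i)
  -- `ι` is nonempty, so the division by the noise plus interference never hits `x / 0 = 0`.
  have hinterference_pos : ∀ᵐ ω ∂μ, 0 < N + ∑ i, h i ω * d i ^ (-α) := by
    filter_upwards [hh_pos] with ω hω
    have := sum_pos (fun i _ ↦ mul_pos (hω i) (rpow_pos_of_pos (hd i) (-α))) univ_nonempty
    linarith
  have hevent :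
      {ω | S < g ω * r ^ (-α) / (N + ∑ i, h i ω * d i ^ (-α))} =ᵐ[μ] {ω | X ω < g ω} := by
    filter_upwards [hinterference_pos] with ω hω
    exact propext (lt_mul_rpow_neg_div_iff hr hω α S (g ω))
  have hXg : IndepFun X g μ := by
    have hφ : Measurable fun x : ι → ℝ ↦ S * r ^ α * (N + ∑ i, x i * d i ^ (-α)) := by fun_prop
    exact (h_indep.indepFun_pi_option_elim hg_meas hh_meas).comp hφ measurable_id
  have hX_nonneg : ∀ᵐ ω ∂μ, 0 ≤ X ω := hinterference_pos.mono fun ω hω ↦ by positivity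
  have hsplit : ∀ ω, ENNReal.ofReal (exp (-(1 * X ω)))
      = ENNReal.ofReal (exp (-(S * r ^ α * N))) *
        ENNReal.ofReal (exp (-∑ i, S * r ^ α * d i ^ (-α) * h i ω)) := fun ω ↦ by
    have hsum :
        S * r ^ α * ∑ i, h i ω * d i ^ (-α) = ∑ i, S * r ^ α * d i ^ (-α) * h i ω := by
      rw [mul_sum]
      exact sum_congr rfl fun i _ ↦ by ring
    rw [← ENNReal.ofReal_mul (exp_pos _).le, ← exp_add, ← hsum]
    congr 2
    ring
  rw [measureReal_def, measure_congr hevent,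
    measure_lt_eq_lintegral_exp_of_indepFun one_pos hX hg_meas hXg hg_exp hX_nonneg]
  have hh_indep : iIndepFun h μ := h_indep.precomp (g := some) (Option.some_injective ι)
  have hc : ∀ i, 0 ≤ S * r ^ α * d i ^ (-α) := fun i ↦ by have := hd i; positivity
  simp_rw [hsplit]
  rw [lintegral_const_mul _ (by fun_prop), lintegral_exp_neg_sum_of_iIndepFun one_pos hh_meas
      hh_indep hh_exp hc, ENNReal.toReal_mul, ENNReal.toReal_prod,
    ENNReal.toReal_ofReal (exp_pos _).le]
  refine congrArg _ (Finset.prod_congr rfl fun i _ ↦ ?_)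
  rw [ENNReal.toReal_ofReal (by have := hc i; positivity), one_div]

theorem cell_centre_conditional_coverage_general
    {Ω : Type*} [MeasurableSpace Ω] (μ : Measure Ω) [IsProbabilityMeasure μ]
    {ι : Type*} [Fintype ι] [Nonempty ι]
    (g : Ω → ℝ) (h : ι → Ω → ℝ)
    (hg_meas : Measurable g) (hh_meas : ∀ i, Measurable (h i))
    (hg_exp : Measure.map g μ = expMeasure 1)
    (hh_exp : ∀ i, Measure.map (h i) μ = expMeasure 1)
    (h_indep : iIndepFun
      (fun o : Option ι => Option.elim o g h) μ)
    (r α N : ℝ) (hr : 0 < r) (hN : 0 ≤ N)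
    (d : ι → ℝ) (hd : ∀ i, 0 < d i)
    (T Sth : ℝ) (hSth : 0 ≤ Sth) :
    ((μ[|{ω | Sth < g ω * r ^ (-α) / (N + ∑ i, h i ω * d i ^ (-α))}])
        {ω | T < g ω * r ^ (-α) / (N + ∑ i, h i ω * d i ^ (-α))}).toReal
      = (Real.exp (-(max T Sth * r ^ α * N)) *
            ∏ i, (1 + max T Sth * r ^ α * d i ^ (-α))⁻¹) /
        (Real.exp (-(Sth * r ^ α * N)) *
            ∏ i, (1 + Sth * r ^ α * d i ^ (-α))⁻¹) := by
  set η : Ω → ℝ := fun ω ↦ g ω * r ^ (-α) / (N + ∑ i, h i ω * d i ^ (-α))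
  have hη : Measurable η := by fun_prop
  have hinter : {ω | Sth < η ω} ∩ {ω | T < η ω} = {ω | max T Sth < η ω} := by
    ext ω
    simp only [mem_inter_iff, mem_ofPred_eq, max_lt_iff, and_comm]
  rw [cond_apply (measurableSet_lt measurable_const hη), ENNReal.toReal_mul, ENNReal.toReal_inv,
    ← measureReal_def, ← measureReal_def, hinter, inv_mul_eq_div,
    measureReal_lt_sinr μ g h hg_meas hh_meas hg_exp hh_exp h_indep hr hN α hd hSth,
    measureReal_lt_sinr μ g h hg_meas hh_meas hg_exp hh_exp h_indep hr hN α hd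
      (le_max_of_le_right hSth)]

/-- cell-centre conditional coverage probability.  With SINR
`η = g r^{-α}/(N + ∑ i, h i * d i^{-α})` (unit-rate exponential independent fadings),
for `T ≥ 0` and `S_th ≥ 0`,
`P(η > T | η > S_th)` equals
`[e^{-max(T,S_th) r^α N} ∏ i (1 + max(T,S_th) r^α d i^{-α})⁻¹] /
 [e^{-S_th r^α N} ∏ i (1 + S_th r^α d i^{-α})⁻¹]`. -/
theorem cell_centre_conditional_coverage
    {Ω : Type*} [MeasurableSpace Ω] (μ : Measure Ω) [IsProbabilityMeasure μ]
    {ι : Type*} [Fintype ι] [Nonempty ι]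
    (g : Ω → ℝ) (h : ι → Ω → ℝ)
    (hg_meas : Measurable g) (hh_meas : ∀ i, Measurable (h i))
    (hg_exp : Measure.map g μ = expMeasure 1)
    (hh_exp : ∀ i, Measure.map (h i) μ = expMeasure 1)
    (h_indep : iIndepFun
      (fun o : Option ι => Option.elim o g h) μ)
    (r α N : ℝ) (hr : 0 < r) (hα : 2 ≤ α) (hN : 0 ≤ N)
    (d : ι → ℝ) (hd : ∀ i, 0 < d i)
    (T Sth : ℝ) (hT : 0 ≤ T) (hSth : 0 ≤ Sth) :
    ((μ[|{ω | Sth < g ω * r ^ (-α) / (N + ∑ i, h i ω * d i ^ (-α))}])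
        {ω | T < g ω * r ^ (-α) / (N + ∑ i, h i ω * d i ^ (-α))}).toReal
      = (Real.exp (-(max T Sth * r ^ α * N)) *
            ∏ i, (1 + max T Sth * r ^ α * d i ^ (-α))⁻¹) /
        (Real.exp (-(Sth * r ^ α * N)) *
            ∏ i, (1 + Sth * r ^ α * d i ^ (-α))⁻¹) :=
  cell_centre_conditional_coverage_general μ g h hg_meas hh_meas hg_exp hh_exp h_indep r α N hr hN d
    hd T Sth hSth
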